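/- Let s ≥ 1, n = 3^s, and 0 ≤ k ≤ s − 1. For every r ∈ ZMod n, the Trivance reachability set after step k has cardinality exactly 3^(k+1): (D k r).card = 3^(k+1). Thus the number of distinct data blocks known to each node triples in every step of the Trivance pattern. -/
import Mathlib


/-- Trivance reachability sets on a ring of `n` nodes (identified with `ZMod n`):
`trivanceD n k r` is the set of nodes whose data node `r` holds after step `k`. -/
def trivanceD (n : ℕ) : ℕ → ZMod n → Finset (ZMod n)
  | 0, r => {r - 1, r, r + 1}
  | (k+1), r =>
      trivanceD n k (r - 3 ^ (k+1)) ∪ trivanceD n k r ∪ trivanceD n k (r + 3 ^ (k+1))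

def trivanceM : ℕ → ℤ
  | 0 => 1
  | (k+1) => trivanceM k + 3 ^ (k+1)

lemma trivanceM_spec (k : ℕ) : 2 * trivanceM k + 1 = 3 ^ (k+1) := by
  induction k with
  | zero => rfl
  | succ k ih =>
      have : (3:ℤ) ^ (k+2) = 3 * 3 ^ (k+1) := by ring
      simp only [trivanceM]
      omega

lemma trivanceD_eq (n : ℕ) (k : ℕ) (r : ZMod n) :
    trivanceD n k r
      = (Finset.Icc (-trivanceM k) (trivanceM k)).image (fun i : ℤ => r + (i : ZMod n)) := by
  induction k generalizing r with
  | zero =>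
      ext x
      simp only [trivanceD, trivanceM, Finset.mem_insert, Finset.mem_singleton,
        Finset.mem_image, Finset.mem_Icc]
      constructor
      · rintro (h | h | h)
        · exact ⟨-1, by norm_num, by push_cast; rw [h]; try ring⟩
        · exact ⟨0, by norm_num, by push_cast; rw [h]; try ring⟩
        · exact ⟨1, by norm_num, by push_cast; rw [h]; try ring⟩
      · rintro ⟨i, ⟨h1, h2⟩, h⟩
        interval_cases i
        · left; rw [← h]; push_cast; try ring
        · right; left; rw [← h]; push_cast; try ring
        · right; right; rw [← h]; push_cast; try ring
  | succ k ih =>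
      have hm := trivanceM_spec k
      have hp : (0:ℤ) ≤ 3 ^ (k+1) := by positivity
      ext x
      simp only [trivanceD, ih, Finset.mem_union, Finset.mem_image, Finset.mem_Icc,
        trivanceM]
      constructor
      · rintro ((⟨i, ⟨h1, h2⟩, h⟩ | ⟨i, ⟨h1, h2⟩, h⟩) | ⟨i, ⟨h1, h2⟩, h⟩)
        · exact ⟨i - 3 ^ (k+1), ⟨by omega, by omega⟩, by rw [← h]; push_cast; ring⟩
        · exact ⟨i, ⟨by omega, by omega⟩, h⟩
        · exact ⟨i + 3 ^ (k+1), ⟨by omega, by omega⟩, by rw [← h]; push_cast; ring⟩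
      · rintro ⟨i, ⟨h1, h2⟩, h⟩
        by_cases hc1 : i < -trivanceM k
        · left; left
          exact ⟨i + 3 ^ (k+1), ⟨by omega, by omega⟩, by rw [← h]; push_cast; ring⟩
        · by_cases hc2 : i ≤ trivanceM k
          · left; right; exact ⟨i, ⟨by omega, by omega⟩, h⟩
          · right
            exact ⟨i - 3 ^ (k+1), ⟨by omega, by omega⟩, by rw [← h]; push_cast; ring⟩

/-- **Tripling of known blocks.** Let `s ≥ 1`, `n = 3^s`, and `0 ≤ k ≤ s - 1`.
For every node `r`, the Trivance reachability set after step `k` has cardinality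
exactly `3^(k+1)`: the number of distinct data blocks known to each node triples
in every step of the Trivance pattern. -/
theorem trivance_card_triples (s : ℕ) (hs : 1 ≤ s) (k : ℕ) (hk : k ≤ s - 1)
    (r : ZMod (3 ^ s)) :
    (trivanceD (3 ^ s) k r).card = 3 ^ (k + 1) := by
  have hm := trivanceM_spec k
  have hle : (3:ℤ) ^ (k+1) ≤ 3 ^ s := by
    apply pow_le_pow_right₀ (by norm_num) (by omega)
  rw [trivanceD_eq]
  rw [Finset.card_image_of_injOn]
  · rw [Int.card_Icc]
    have : trivanceM k + 1 - -trivanceM k = (3:ℤ) ^ (k+1) := by omega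
    rw [this]
    have : ((3:ℤ) ^ (k+1)).toNat = 3 ^ (k+1) := by
      rw [show (3:ℤ) ^ (k+1) = ((3 ^ (k+1) : ℕ) : ℤ) by push_cast; ring, Int.toNat_natCast]
    omega
  · intro i hi j hj hij
    simp only [Finset.mem_coe, Finset.mem_Icc] at hi hj
    simp only at hij
    have hcast : ((i : ZMod (3 ^ s))) = (j : ZMod (3 ^ s)) := add_left_cancel hij
    have : ((i - j : ℤ) : ZMod (3 ^ s)) = 0 := by push_cast; rw [hcast]; ring
    rw [ZMod.intCast_zmod_eq_zero_iff_dvd] at this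
    have hne : ((3 ^ s : ℕ) : ℤ) = (3:ℤ) ^ s := by push_cast; ring
    rw [hne] at this
    by_contra hij'
    have habs : (3:ℤ) ^ s ≤ |i - j| :=
      Int.le_of_dvd (abs_pos.mpr (sub_ne_zero.mpr hij')) ((dvd_abs _ _).mpr this)
    have h2 : |i - j| < (3:ℤ) ^ (k+1) := by rw [abs_lt]; constructor <;> omega
    linarith
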